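/- arXiv:1605.09074 — 5 statements merged into one kernel-verified Lean document; each statement's English description precedes it below -/
import Mathlib

section
/- Consider the problem min{ξ'(q − p) + V(p, q) : q ∈ 𝒫(ε)} where V(p, q) = Σ_i q_i log(q_i/p_i) is the KL divergence, 𝒫(ε) = {q : Σ_i q_i = 1, q_i ≥ ε} with 0 ≤ ε < 1/m, and p is in the relative interior of the simplex. The optimal solution is q*_i = max{η*, p_i e^{−ξ_i}} / Σ_{i'} max{η*, p_{i'} e^{−ξ_{i'}}}, where η* ∈ [0, max_i p_i e^{−ξ_i}) is the unique solution of ε = η* / Σ_i max{η*, p_i e^{−ξ_i}}. -/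
open scoped BigOperators

lemma key_ineq (a x y : ℝ) (ha : 0 < a) (hx : 0 ≤ x) (hy : 0 < y) :
    y * Real.log (y / a) + (Real.log (y / a) + 1) * (x - y) ≤ x * Real.log (x / a) := by
  rcases eq_or_lt_of_le hx with h | h
  · have h0 : x = 0 := h.symm
    subst h0
    have : y * Real.log (y / a) + (Real.log (y / a) + 1) * (0 - y) = -y := by ring
    rw [this]
    simp only [zero_mul]
    linarith
  · have h1 : Real.log (x / a) = Real.log (x / y) + Real.log (y / a) := by
      rw [← Real.log_mul (by positivity) (by positivity)]
      congr 1
      field_simp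
    have h2 : x - y ≤ x * Real.log (x / y) := by
      have hl := Real.log_le_sub_one_of_pos (show (0:ℝ) < y / x by positivity)
      have hinv : Real.log (y / x) = - Real.log (x / y) := by
        rw [← Real.log_inv]
        congr 1
        field_simp
      rw [hinv] at hl
      have := mul_le_mul_of_nonneg_left hl h.le
      have hyx : x * (y / x) = y := by field_simp
      nlinarith
    rw [h1]
    nlinarith

/-- KKT-style optimality: the truncated vector minimizes `∑ q i log (q i / a i)`. -/
lemma aux_min {m : ℕ} (hm : 0 < m) (a : Fin m → ℝ) (ha : ∀ i, 0 < a i)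
    (η : ℝ) (hη0 : 0 ≤ η)
    (q : Fin m → ℝ) (hq1 : ∑ i, q i = 1)
    (hq2 : ∀ i, η / (∑ i', max η (a i')) ≤ q i) :
    ∑ i, (max η (a i) / ∑ i', max η (a i')) *
        Real.log ((max η (a i) / ∑ i', max η (a i')) / a i)
      ≤ ∑ i, q i * Real.log (q i / a i) := by
  have hne : (Finset.univ : Finset (Fin m)).Nonempty :=
    Finset.univ_nonempty_iff.mpr (Fin.pos_iff_nonempty.mp hm)
  set S := ∑ i', max η (a i') with hS
  have hmaxpos : ∀ i, 0 < max η (a i) := fun i => lt_max_of_lt_right (ha i)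
  have hSpos : 0 < S := Finset.sum_pos (fun i _ => hmaxpos i) hne
  set Q : Fin m → ℝ := fun i => max η (a i) / S with hQ
  show ∑ i, Q i * Real.log (Q i / a i) ≤ ∑ i, q i * Real.log (q i / a i)
  have hQpos : ∀ i, 0 < Q i := fun i => div_pos (hmaxpos i) hSpos
  have hQsum : ∑ i, Q i = 1 := by
    rw [hQ]
    rw [← Finset.sum_div]
    exact div_self hSpos.ne'
  have hqnn : ∀ i, 0 ≤ q i := fun i => le_trans (div_nonneg hη0 hSpos.le) (hq2 i)
  have step1 : ∀ i, Q i * Real.log (Q i / a i) + (Real.log (Q i / a i) + 1) * (q i - Q i)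
      ≤ q i * Real.log (q i / a i) :=
    fun i => key_ineq (a i) (q i) (Q i) (ha i) (hqnn i) (hQpos i)
  have step2 : ∀ i, (1 - Real.log S) * (q i - Q i)
      ≤ (Real.log (Q i / a i) + 1) * (q i - Q i) := by
    intro i
    rcases le_or_gt η (a i) with h | h
    · have hmax : max η (a i) = a i := max_eq_right h
      have hl : Real.log (Q i / a i) = - Real.log S := by
        have hq : Q i / a i = 1 / S := by
          show (max η (a i) / S) / a i = 1 / S
          rw [hmax, div_div]
          rw [div_eq_div_iff (mul_pos hSpos (ha i)).ne' hSpos.ne']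
          ring
        rw [hq, one_div, Real.log_inv]
      rw [hl]
      apply le_of_eq
      ring
    · have hmax : max η (a i) = η := max_eq_left h.le
      have hQi : Q i = η / S := by
        show max η (a i) / S = η / S
        rw [hmax]
      have h3 : 0 ≤ q i - Q i := by
        rw [hQi]
        linarith [hq2 i]
      have h2 : Real.log (Q i / a i) = Real.log η - Real.log S - Real.log (a i) := by
        rw [hQi, div_div]
        have hηpos : 0 < η := (ha i).trans h
        rw [Real.log_div hηpos.ne' (mul_pos hSpos (ha i)).ne',
          Real.log_mul hSpos.ne' (ha i).ne']
        ring
      have h1 : Real.log (a i) ≤ Real.log η := Real.log_le_log (ha i) h.le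
      apply mul_le_mul_of_nonneg_right _ h3
      rw [h2]
      linarith
  have sum0 : ∑ i, (1 - Real.log S) * (q i - Q i) = 0 := by
    rw [← Finset.mul_sum, Finset.sum_sub_distrib, hq1, hQsum]
    ring
  calc ∑ i, Q i * Real.log (Q i / a i)
      = ∑ i, Q i * Real.log (Q i / a i) + ∑ i, (1 - Real.log S) * (q i - Q i) := by
        rw [sum0]; ring
    _ ≤ ∑ i, Q i * Real.log (Q i / a i)
        + ∑ i, (Real.log (Q i / a i) + 1) * (q i - Q i) := by
        have := Finset.sum_le_sum (fun i (_ : i ∈ Finset.univ) => step2 i)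
        linarith
    _ = ∑ i, (Q i * Real.log (Q i / a i) + (Real.log (Q i / a i) + 1) * (q i - Q i)) := by
        rw [Finset.sum_add_distrib]
    _ ≤ ∑ i, q i * Real.log (q i / a i) :=
        Finset.sum_le_sum (fun i _ => step1 i)

/-- Explicit solution of the entropic-descent stepwise subproblem over the restricted
simplex `𝒫(ε)`: given the root `η` of `ε = η / Σ_i max{η, p_i e^{-ξ_i}}` with
`0 ≤ η < max_i p_i e^{-ξ_i}`, the vector
`q*_i = max{η, p_i e^{-ξ_i}} / Σ_{i'} max{η, p_{i'} e^{-ξ_{i'}}}` is feasible and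
minimizes `ξ'(q - p) + V(p, q)` over `q ∈ 𝒫(ε)`, where `V` is the KL divergence. -/
theorem stmt6 {m : ℕ} (hm : 0 < m) (p ξ : Fin m → ℝ)
    (hp : ∀ i, 0 < p i) (hp1 : ∑ i, p i = 1)
    (ε : ℝ) (hε0 : 0 ≤ ε) (hε : ε < 1 / m)
    (η : ℝ) (hη0 : 0 ≤ η)
    (hηM : η < Finset.univ.sup' (Finset.univ_nonempty_iff.mpr (Fin.pos_iff_nonempty.mp hm))
        (fun i => p i * Real.exp (-ξ i)))
    (hroot : ε = η / ∑ i, max η (p i * Real.exp (-ξ i))) :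
    (∀ i, ε ≤ max η (p i * Real.exp (-ξ i)) / ∑ i', max η (p i' * Real.exp (-ξ i'))) ∧
    (∑ i, max η (p i * Real.exp (-ξ i)) / ∑ i', max η (p i' * Real.exp (-ξ i'))) = 1 ∧
    ∀ q : Fin m → ℝ, (∑ i, q i = 1) → (∀ i, ε ≤ q i) →
      (∑ i, ξ i * ((max η (p i * Real.exp (-ξ i)) / ∑ i', max η (p i' * Real.exp (-ξ i'))) - p i)) +
        ∑ i, (max η (p i * Real.exp (-ξ i)) / ∑ i', max η (p i' * Real.exp (-ξ i'))) *
          Real.log ((max η (p i * Real.exp (-ξ i)) / ∑ i', max η (p i' * Real.exp (-ξ i'))) / p i)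
      ≤ (∑ i, ξ i * (q i - p i)) + ∑ i, q i * Real.log (q i / p i) := by
  have hne : (Finset.univ : Finset (Fin m)).Nonempty :=
    Finset.univ_nonempty_iff.mpr (Fin.pos_iff_nonempty.mp hm)
  have hapos : ∀ i, 0 < p i * Real.exp (-ξ i) :=
    fun i => mul_pos (hp i) (Real.exp_pos _)
  have hmaxpos : ∀ i, 0 < max η (p i * Real.exp (-ξ i)) :=
    fun i => lt_max_of_lt_right (hapos i)
  have hSpos : 0 < ∑ i', max η (p i' * Real.exp (-ξ i')) :=
    Finset.sum_pos (fun i _ => hmaxpos i) hne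
  -- the conversion identity
  have conv : ∀ r : Fin m → ℝ, (∀ i, 0 ≤ r i) →
      (∑ i, ξ i * (r i - p i)) + ∑ i, r i * Real.log (r i / p i)
        = (∑ i, r i * Real.log (r i / (p i * Real.exp (-ξ i)))) - ∑ i, ξ i * p i := by
    intro r hr
    have hterm : ∀ i, r i * Real.log (r i / (p i * Real.exp (-ξ i)))
        = ξ i * r i + r i * Real.log (r i / p i) := by
      intro i
      rcases eq_or_lt_of_le (hr i) with h | h
      · rw [← h]; ring
      · have hlog : Real.log (r i / (p i * Real.exp (-ξ i)))
            = Real.log (r i / p i) + ξ i := by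
          rw [Real.log_div h.ne' (hapos i).ne',
              Real.log_mul (hp i).ne' (Real.exp_pos _).ne', Real.log_exp,
              Real.log_div h.ne' (hp i).ne']
          ring
        rw [hlog]; ring
    have h1 : ∑ i, r i * Real.log (r i / (p i * Real.exp (-ξ i)))
        = (∑ i, ξ i * r i) + ∑ i, r i * Real.log (r i / p i) := by
      rw [← Finset.sum_add_distrib]
      exact Finset.sum_congr rfl (fun i _ => hterm i)
    have h2 : (∑ i, ξ i * (r i - p i)) = (∑ i, ξ i * r i) - ∑ i, ξ i * p i := by
      rw [← Finset.sum_sub_distrib]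
      exact Finset.sum_congr rfl (fun i _ => by ring)
    rw [h1, h2]
    ring
  refine ⟨?_, ?_, ?_⟩
  · intro i
    rw [hroot]
    gcongr
    exact le_max_left _ _
  · rw [← Finset.sum_div]
    exact div_self hSpos.ne'
  · intro q hq1 hq2
    have hqnn : ∀ i, 0 ≤ q i := fun i => le_trans hε0 (hq2 i)
    have hQnn : ∀ i, 0 ≤ max η (p i * Real.exp (-ξ i)) /
        ∑ i', max η (p i' * Real.exp (-ξ i')) :=
      fun i => le_of_lt (div_pos (hmaxpos i) hSpos)
    have hq2' : ∀ i, η / (∑ i', max η (p i' * Real.exp (-ξ i'))) ≤ q i := by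
      intro i
      rw [← hroot]
      exact hq2 i
    calc (∑ i, ξ i * ((max η (p i * Real.exp (-ξ i)) / ∑ i', max η (p i' * Real.exp (-ξ i'))) - p i)) +
        ∑ i, (max η (p i * Real.exp (-ξ i)) / ∑ i', max η (p i' * Real.exp (-ξ i'))) *
          Real.log ((max η (p i * Real.exp (-ξ i)) / ∑ i', max η (p i' * Real.exp (-ξ i'))) / p i)
        = (∑ i, (max η (p i * Real.exp (-ξ i)) / ∑ i', max η (p i' * Real.exp (-ξ i'))) *
            Real.log ((max η (p i * Real.exp (-ξ i)) / ∑ i', max η (p i' * Real.exp (-ξ i'))) /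
              (p i * Real.exp (-ξ i)))) - ∑ i, ξ i * p i :=
          conv (fun i => max η (p i * Real.exp (-ξ i)) / ∑ i', max η (p i' * Real.exp (-ξ i'))) hQnn
      _ ≤ (∑ i, q i * Real.log (q i / (p i * Real.exp (-ξ i)))) - ∑ i, ξ i * p i := by
          apply sub_le_sub_right
          exact aux_min hm (fun i => p i * Real.exp (-ξ i)) hapos η hη0 q hq1 hq2'
      _ = (∑ i, ξ i * (q i - p i)) + ∑ i, q i * Real.log (q i / p i) := (conv q hqnn).symm
end

section
/- Let {D^k}_{k≥1} be a sequence of nonnegative reals. Suppose there exist exponents 0 < α₂ < α₁ ≤ 1 and constants C₁, C₂ > 0 such that D^{k+1} ≤ (1 − C₁/k^{α₂}) D^k + C₂(1/k^{2α₂} + 1/k^{2α₁−α₂}) for all sufficiently large k. Then there exists a constant C > 0 such that D^k ≤ C(1/k^{α₂} + 1/k^{2(α₁−α₂)}) for all k ≥ 1. -/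
/-!
Set `ψ k = k^{-α₂} + k^{-2(α₁-α₂)}`. The noise term factors as
`k^{-2α₂} + k^{-(2α₁-α₂)} = k^{-α₂} ψ k`, and since both exponents of `ψ` are at most `2`,
`ψ (k+1) ≥ (1 - 2/k) ψ k`. For `M ≥ 2C₂/C₁` the recursion therefore propagates
`D k ≤ M ψ k` to `D (k+1) ≤ M (1 - C₁ k^{-α₂}/2) ψ k`, and because `α₂ < 1` the contraction
`C₁ k^{-α₂}/2` eventually beats the loss `2/k`. Enlarging `M` to cover the finitely many
initial terms, induction gives the bound for all `k ≥ 1`.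
-/

open Filter Real

noncomputable def sumInvRpow (a b x : ℝ) : ℝ := 1 / x ^ a + 1 / x ^ b

lemma sumInvRpow_pos {a b x : ℝ} (hx : 0 < x) : 0 < sumInvRpow a b x := by
  unfold sumInvRpow
  have := rpow_pos_of_pos hx a
  have := rpow_pos_of_pos hx b
  positivity

lemma one_div_rpow_two_mul_add_one_div_rpow_add {a b x : ℝ} (hx : 0 < x) :
    1 / x ^ (2 * a) + 1 / x ^ (a + b) = 1 / x ^ a * sumInvRpow a b x := by
  have := rpow_pos_of_pos hx a
  have := rpow_pos_of_pos hx b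
  rw [sumInvRpow, two_mul, rpow_add hx, rpow_add hx]
  field_simp

lemma one_sub_two_div_le_div_add_one_sq {x : ℝ} (hx : 0 < x) :
    1 - 2 / x ≤ (x / (x + 1)) ^ 2 := by
  rw [div_pow, sub_le_iff_le_add, div_add_div _ _ (by positivity) hx.ne', le_div_iff₀ (by positivity)]
  nlinarith

lemma one_sub_two_div_mul_one_div_rpow_le {x γ : ℝ} (hx : 0 < x) (hγ : γ ≤ 2) :
    (1 - 2 / x) * (1 / x ^ γ) ≤ 1 / (x + 1) ^ γ := by
  have hx1 : 0 < x + 1 := by linarith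
  have hq : x / (x + 1) ≤ 1 := (div_le_one hx1).2 (by linarith)
  have hsq : 1 - 2 / x ≤ (x / (x + 1)) ^ γ := by
    calc 1 - 2 / x ≤ (x / (x + 1)) ^ 2 := one_sub_two_div_le_div_add_one_sq hx
      _ = (x / (x + 1)) ^ (2 : ℝ) := (rpow_two _).symm
      _ ≤ (x / (x + 1)) ^ γ := rpow_le_rpow_of_exponent_ge (by positivity) hq hγ
  have hxγ := rpow_pos_of_pos hx γ
  calc (1 - 2 / x) * (1 / x ^ γ) ≤ (x / (x + 1)) ^ γ * (1 / x ^ γ) := by gcongr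
    _ = 1 / (x + 1) ^ γ := by
      rw [div_rpow hx.le hx1.le]
      field_simp

lemma one_sub_two_div_mul_sumInvRpow_le {a b x : ℝ} (hx : 0 < x) (ha : a ≤ 2) (hb : b ≤ 2) :
    (1 - 2 / x) * sumInvRpow a b x ≤ sumInvRpow a b (x + 1) := by
  rw [sumInvRpow, sumInvRpow, mul_add]
  exact add_le_add (one_sub_two_div_mul_one_div_rpow_le hx ha)
    (one_sub_two_div_mul_one_div_rpow_le hx hb)

lemma eventually_div_rpow_le_one {a : ℝ} (ha : 0 < a) (c : ℝ) :
    ∀ᶠ x : ℝ in atTop, c / x ^ a ≤ 1 := by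
  filter_upwards [(tendsto_rpow_atTop ha).eventually_ge_atTop c,
    (tendsto_rpow_atTop ha).eventually_gt_atTop 0] with x hc hpos
  exact (div_le_one hpos).2 hc

lemma eventually_div_le_div_rpow {a : ℝ} (ha : a < 1) (c : ℝ) {ε : ℝ} (hε : 0 < ε) :
    ∀ᶠ x : ℝ in atTop, c / x ≤ ε / x ^ a := by
  filter_upwards [(tendsto_rpow_atTop (sub_pos.2 ha)).eventually_ge_atTop (c / ε),
    eventually_gt_atTop 0] with x hc hx
  have hxa := rpow_pos_of_pos hx a
  rw [div_le_div_iff₀ hx hxa, div_le_iff₀ hε] at *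
  calc c * x ^ a ≤ x ^ (1 - a) * ε * x ^ a := by gcongr
    _ = ε * x := by rw [mul_right_comm, ← rpow_add hx, sub_add_cancel, rpow_one, mul_comm]

lemma exists_pos_forall_le_mul (D ψ : ℕ → ℝ) (s : Finset ℕ) (hψ : ∀ k ∈ s, 0 < ψ k) (M₀ : ℝ) :
    ∃ M > 0, M₀ ≤ M ∧ ∀ k ∈ s, D k ≤ M * ψ k := by
  obtain ⟨M₁, hM₁⟩ := (s.image fun k => D k / ψ k).exists_le
  refine ⟨max (max M₀ M₁) 1, by positivity, (le_max_left _ _).trans (le_max_left _ _),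
    fun k hk => ?_⟩
  rw [← div_le_iff₀ (hψ k hk)]
  exact (hM₁ _ (Finset.mem_image_of_mem _ hk)).trans ((le_max_right _ _).trans (le_max_left _ _))

lemma recursion_step {d ψ r t C₁ C₂ M : ℝ} (hr : 0 < r) (hψ : 0 ≤ ψ) (hM : 0 ≤ M)
    (hd : d ≤ M * ψ) (hC₁ : C₁ / r ≤ 1) (ht : t ≤ C₁ / 2 / r) (hC₂ : 2 * C₂ ≤ M * C₁) :
    (1 - C₁ / r) * d + C₂ * (1 / r * ψ) ≤ M * ((1 - t) * ψ) := by
  have hhalf : C₁ / r = 2 * (C₁ / 2 / r) := by ring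
  have hdecay : (1 - C₁ / r) * d ≤ (1 - C₁ / r) * (M * ψ) := by gcongr
  have hnoise : C₂ * (1 / r) * ψ ≤ M * (C₁ / 2 / r) * ψ := by
    rw [show M * (C₁ / 2 / r) = M * C₁ / 2 * (1 / r) by ring]
    gcongr
    linarith
  have hloss : M * t * ψ ≤ M * (C₁ / 2 / r) * ψ := by gcongr
  rw [hhalf] at hdecay ⊢
  linarith

theorem stmt8_general (D : ℕ → ℝ)
    (α1 α2 C1 C2 : ℝ) (h2 : 0 < α2) (h21 : α2 < α1) (h1 : α1 ≤ 1)
    (hC1 : 0 < C1)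
    (hrec : ∃ K : ℕ, ∀ k ≥ K, D (k + 1) ≤ (1 - C1 / (k : ℝ) ^ α2) * D k
        + C2 * (1 / (k : ℝ) ^ (2 * α2) + 1 / (k : ℝ) ^ (2 * α1 - α2))) :
    ∃ C > (0 : ℝ), ∀ k : ℕ, 1 ≤ k →
      D k ≤ C * (1 / (k : ℝ) ^ α2 + 1 / (k : ℝ) ^ (2 * (α1 - α2))) := by
  obtain ⟨K, hK⟩ := hrec
  set ψ : ℕ → ℝ := fun k => sumInvRpow α2 (2 * (α1 - α2)) k
  have hψ : ∀ k : ℕ, 1 ≤ k → 0 < ψ k := fun k hk => sumInvRpow_pos (by exact_mod_cast hk)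
  have hψ_succ : ∀ k : ℕ, 1 ≤ k → (1 - 2 / (k : ℝ)) * ψ k ≤ ψ (k + 1) := fun k hk => by
    simpa only [ψ, Nat.cast_succ] using one_sub_two_div_mul_sumInvRpow_le
      (a := α2) (b := 2 * (α1 - α2)) (by exact_mod_cast hk) (by linarith) (by linarith)
  have hrecψ : ∀ k ≥ max K 1, D (k + 1) ≤
      (1 - C1 / (k : ℝ) ^ α2) * D k + C2 * (1 / (k : ℝ) ^ α2 * ψ k) := fun k hk => by
    have hk0 : (0 : ℝ) < k := by exact_mod_cast le_of_max_le_right hk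
    simpa only [show 2 * α1 - α2 = α2 + 2 * (α1 - α2) by ring,
      one_div_rpow_two_mul_add_one_div_rpow_add hk0] using hK k (le_of_max_le_left hk)
  obtain ⟨K₀, hK₀⟩ := eventually_atTop.1 <| (eventually_ge_atTop (max K 1)).and <|
    tendsto_natCast_atTop_atTop.eventually <| (eventually_div_rpow_le_one h2 C1).and <|
      eventually_div_le_div_rpow (h21.trans_le h1) 2 (half_pos hC1)
  obtain ⟨M, hM, hMC, hMD⟩ := exists_pos_forall_le_mul D ψ (Finset.Icc 1 K₀)
    (fun k hk => hψ k (Finset.mem_Icc.1 hk).1) (2 * C2 / C1)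
  have htail : ∀ k, K₀ ≤ k → D k ≤ M * ψ k := by
    intro k hk
    induction k, hk using Nat.le_induction with
    | base => exact hMD K₀ (Finset.mem_Icc.2 ⟨le_of_max_le_right (hK₀ K₀ le_rfl).1, le_rfl⟩)
    | succ j hj ih =>
      obtain ⟨hjK, hC1j, hlossj⟩ := hK₀ j hj
      calc D (j + 1) ≤ (1 - C1 / (j : ℝ) ^ α2) * D j + C2 * (1 / (j : ℝ) ^ α2 * ψ j) :=
            hrecψ j hjK
        _ ≤ M * ((1 - 2 / j) * ψ j) :=
            recursion_step (rpow_pos_of_pos (by exact_mod_cast le_of_max_le_right hjK) α2)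
              (hψ j (le_of_max_le_right hjK)).le hM.le ih hC1j hlossj
              (by rwa [div_le_iff₀ hC1] at hMC)
        _ ≤ M * ψ (j + 1) := by gcongr; exact hψ_succ j (le_of_max_le_right hjK)
  refine ⟨M, hM, fun k hk => ?_⟩
  rcases le_or_gt k K₀ with hkK₀ | hkK₀
  · exact hMD k (Finset.mem_Icc.2 ⟨hk, hkK₀⟩)
  · exact htail k hkK₀.le

/-- Recursion lemma for positive sequences: if
`D (k+1) ≤ (1 - C₁/k^{α₂}) D k + C₂ (1/k^{2α₂} + 1/k^{2α₁-α₂})` for all large `k`,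
with `0 < α₂ < α₁ ≤ 1`, then `D k ≤ C (1/k^{α₂} + 1/k^{2(α₁-α₂)})` for all `k ≥ 1`. -/
theorem stmt8 (D : ℕ → ℝ) (hD : ∀ k, 0 ≤ D k)
    (α1 α2 C1 C2 : ℝ) (h2 : 0 < α2) (h21 : α2 < α1) (h1 : α1 ≤ 1)
    (hC1 : 0 < C1) (hC2 : 0 < C2)
    (hrec : ∃ K : ℕ, ∀ k ≥ K, D (k + 1) ≤ (1 - C1 / (k : ℝ) ^ α2) * D k
        + C2 * (1 / (k : ℝ) ^ (2 * α2) + 1 / (k : ℝ) ^ (2 * α1 - α2))) :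
    ∃ C > (0 : ℝ), ∀ k : ℕ, 1 ≤ k →
      D k ≤ C * (1 / (k : ℝ) ^ α2 + 1 / (k : ℝ) ^ (2 * (α1 - α2))) :=
  stmt8_general D α1 α2 C1 C2 h2 h21 h1 hC1 hrec
end

section
/- Let ψ(p) = E_{p^S}[f(X)] be the expectation of a performance function f over the S-fold product of a discrete distribution p = (p_1,…,p_m) on points {z_1,…,z_m}, and define the mixture path p_ε = (1−ε)p + ε·1_i where 1_i is the point mass at z_i. If all p_i > 0, then the one-sided derivative d/dε ψ(p_ε)|_{ε=0+} equals E_{p^S}[f(X)·S_i(X; p)] where the score function S_i(x; p) = Σ_{t=1}^S (𝟙{x_t = z_i}/p_i) − S. -/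
open scoped BigOperators

open Finset

/- Along the mixture path each factor of the product weight is affine in `ε`,
`(1 - ε) p_j + ε 1{j = i} = p_j + ε (1{j = i} - p_j)`, so the product rule gives the weight
times the logarithmic derivative `Σ_t (1{x_t = i} - p_{x_t}) / p_{x_t}`, which is the score
`S_i(x; p)`. Differentiating the finite sum over `x` term by term gives the derivative, even
two-sided. -/

theorem hasDerivAt_prod_add_mul {𝕜 ι : Type*} [NontriviallyNormedField 𝕜] (s : Finset ι)
    (a b : ι → 𝕜) (ha : ∀ t ∈ s, a t ≠ 0) :
    HasDerivAt (fun ε => ∏ t ∈ s, (a t + ε * b t)) ((∏ t ∈ s, a t) * ∑ t ∈ s, b t / a t) 0 := by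
  classical
  have hfactor : ∀ t ∈ s, HasDerivAt (fun ε => a t + ε * b t) (b t) 0 := fun t _ => by
    simpa using ((hasDerivAt_id (0 : 𝕜)).mul_const (b t)).const_add (a t)
  refine (HasDerivAt.fun_finsetProd hfactor).congr_deriv ?_
  rw [mul_sum]
  refine sum_congr rfl fun t ht => ?_
  rw [← prod_erase_mul s a ht, smul_eq_mul]
  simp only [zero_mul, add_zero]
  field_simp [ha t ht]

theorem sum_indicator_sub_div_eq_score {m S : ℕ} (p : Fin m → ℝ) (hp : ∀ j, p j ≠ 0)
    (x : Fin S → Fin m) (i : Fin m) :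
    ∑ t, ((if x t = i then 1 else 0) - p (x t)) / p (x t)
      = (∑ t, if x t = i then 1 / p i else 0) - S := by
  have hterm : ∀ t, ((if x t = i then 1 else 0) - p (x t)) / p (x t)
      = (if x t = i then 1 / p i else 0) - 1 := fun t => by
    split_ifs with h
    · rw [h]; field_simp [hp i]
    · field_simp [hp (x t)]; ring
  simp [hterm, sum_sub_distrib]

theorem stmt12_general {m S : ℕ} (p : Fin m → ℝ) (hp : ∀ i, 0 < p i)
    (f : (Fin S → Fin m) → ℝ) (i : Fin m) :
    HasDerivWithinAt
      (fun ε : ℝ => ∑ x : Fin S → Fin m,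
        (∏ t, ((1 - ε) * p (x t) + ε * (if x t = i then 1 else 0))) * f x)
      (∑ x : Fin S → Fin m, (∏ t, p (x t)) *
        (f x * ((∑ t : Fin S, (if x t = i then 1 / p i else 0)) - (S : ℝ))))
      (Set.Ici 0) 0 := by
  have hp0 : ∀ j, p j ≠ 0 := fun j => (hp j).ne'
  have hterm : ∀ x : Fin S → Fin m, HasDerivAt
      (fun ε : ℝ => (∏ t, ((1 - ε) * p (x t) + ε * (if x t = i then 1 else 0))) * f x)
      ((∏ t, p (x t)) * (f x * ((∑ t, if x t = i then 1 / p i else 0) - S))) 0 := fun x => by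
    have h := (hasDerivAt_prod_add_mul univ (fun t => p (x t))
      (fun t => (if x t = i then 1 else 0) - p (x t)) fun t _ => hp0 (x t)).mul_const (f x)
    rw [sum_indicator_sub_div_eq_score p hp0 x i] at h
    refine (h.congr_deriv (by ring)).congr_of_eventuallyEq (.of_forall fun ε => ?_)
    exact congrArg (· * f x) (prod_congr rfl fun t _ => by ring)
  exact (HasDerivAt.fun_sum fun x _ => hterm x).hasDerivWithinAt

/-- Score-function (Gateaux) derivative of a product-measure expectation: with
`ψ(p) = E_{p^S}[f(X)]` over the `S`-fold product of the discrete distribution `p`, and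
mixture path `p_ε = (1-ε) p + ε 1_i`, the one-sided derivative at `ε = 0+` is
`E_{p^S}[f(X) S_i(X; p)]` where `S_i(x; p) = Σ_t 1{x_t = i}/p_i - S`. -/
theorem stmt12 {m S : ℕ} (p : Fin m → ℝ) (hp : ∀ i, 0 < p i) (hp1 : ∑ i, p i = 1)
    (f : (Fin S → Fin m) → ℝ) (i : Fin m) :
    HasDerivWithinAt
      (fun ε : ℝ => ∑ x : Fin S → Fin m,
        (∏ t, ((1 - ε) * p (x t) + ε * (if x t = i then 1 else 0))) * f x)
      (∑ x : Fin S → Fin m, (∏ t, p (x t)) *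
        (f x * ((∑ t : Fin S, (if x t = i then 1 / p i else 0)) - (S : ℝ))))
      (Set.Ici 0) 0 :=
  stmt12_general p hp f i
end

section
/- For probability vectors p, q on m points with p in the interior of the simplex, and any ξ ∈ ℝ^m, let p̃ = argmin_{u ∈ 𝒫} {ξ'(u − p) + V(p, u)} where V is the KL divergence. Then V(p̃, q) ≤ V(p, q) + ξ'(q − p) + ‖ξ‖²_∞ / 2. -/
/-!
The minimiser of `ξ'(u - p) + V(p, u)` over the simplex is the Gibbs distribution
`w ∝ p e^{-ξ}`: up to constants the objective equals `KL(u ‖ w)`, which vanishes only at `u = w`.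
For this `w` one computes exactly
`V(w, q) = V(p, q) + ξ'(q - p) + (log Σ pᵢ e^{-ξᵢ} + ξ'p)`,
and Hoeffding's lemma bounds the cumulant term in brackets by `‖ξ‖²_∞ / 2`.
-/

open Real InformationTheory

section
variable {ι : Type*} [Fintype ι]

theorem sum_mul_exp_le {p x : ι → ℝ} {a b : ℝ} (hp : ∀ i, 0 ≤ p i) (hp1 : ∑ i, p i = 1)
    (hx : ∀ i, x i ∈ Set.Icc a b) :
    ∑ i, p i * exp (x i) ≤ exp (∑ i, p i * x i + (b - a) ^ 2 / 8) := by
  let _ : MeasurableSpace ι := ⊤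
  let P : PMF ι := .ofFintype (fun i => .ofReal (p i)) (by
    rw [← ENNReal.ofReal_sum_of_nonneg fun i _ => hp i, hp1, ENNReal.ofReal_one])
  have hP (i : ι) : (P i).toReal = p i := ENNReal.toReal_ofReal (hp i)
  have hoeffding := (ProbabilityTheory.hasSubgaussianMGF_of_mem_Icc (μ := P.toMeasure)
    measurable_from_top.aemeasurable (MeasureTheory.ae_of_all _ hx)).mgf_le 1
  simp only [ProbabilityTheory.mgf, PMF.integral_eq_sum, hP, smul_eq_mul, one_mul, exp_sub,
    mul_div_assoc', ← Finset.sum_div] at hoeffding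
  rw [div_le_iff₀ (exp_pos _), ← exp_add] at hoeffding
  refine hoeffding.trans_eq (congrArg exp ?_)
  push_cast
  rw [Real.norm_eq_abs, div_pow, sq_abs]
  ring

theorem mul_klFun_div {u w : ℝ} (hw : 0 < w) :
    w * klFun (u / w) = u * log (u / w) + w - u := by
  rw [klFun_apply]
  field_simp

theorem eq_of_sum_mul_log_div_nonpos {u w : ι → ℝ} (hu : ∀ i, 0 ≤ u i) (hw : ∀ i, 0 < w i)
    (hsum : ∑ i, u i = ∑ i, w i) (hkl : ∑ i, u i * log (u i / w i) ≤ 0) : u = w := by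
  have hterm_nonneg (i : ι) : 0 ≤ w i * klFun (u i / w i) :=
    mul_nonneg (hw i).le (klFun_nonneg (div_nonneg (hu i) (hw i).le))
  have hsum_zero : ∑ i, w i * klFun (u i / w i) = 0 := by
    refine le_antisymm ?_ (Finset.sum_nonneg fun i _ => hterm_nonneg i)
    simp only [mul_klFun_div (hw _), Finset.sum_sub_distrib, Finset.sum_add_distrib, hsum]
    linarith
  funext i
  have hi := (Finset.sum_eq_zero_iff_of_nonneg fun j _ => hterm_nonneg j).1 hsum_zero i
    (Finset.mem_univ i)
  rw [mul_eq_zero, klFun_eq_zero_iff (div_nonneg (hu i) (hw i).le), div_eq_one_iff_eq (hw i).ne']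
    at hi
  exact hi.resolve_left (hw i).ne'

noncomputable def proxObjective (p ξ u : ι → ℝ) : ℝ :=
  ∑ i, ξ i * (u i - p i) + ∑ i, u i * log (u i / p i)

noncomputable def gibbs (p ξ : ι → ℝ) (i : ι) : ℝ :=
  p i * exp (-ξ i) / ∑ j, p j * exp (-ξ j)

variable [Nonempty ι] {p ξ : ι → ℝ}

theorem sum_mul_exp_pos (hp : ∀ i, 0 < p i) : 0 < ∑ i, p i * exp (-ξ i) :=
  Finset.sum_pos (fun i _ => mul_pos (hp i) (exp_pos _)) Finset.univ_nonempty

theorem gibbs_pos (hp : ∀ i, 0 < p i) (i : ι) : 0 < gibbs p ξ i :=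
  div_pos (mul_pos (hp i) (exp_pos _)) (sum_mul_exp_pos hp)

theorem sum_gibbs (hp : ∀ i, 0 < p i) : ∑ i, gibbs p ξ i = 1 := by
  simp only [gibbs]
  rw [← Finset.sum_div, div_self (sum_mul_exp_pos hp).ne']

theorem log_gibbs (hp : ∀ i, 0 < p i) (i : ι) :
    log (gibbs p ξ i) = log (p i) - ξ i - log (∑ j, p j * exp (-ξ j)) := by
  rw [gibbs, log_div (mul_pos (hp i) (exp_pos _)).ne' (sum_mul_exp_pos hp).ne',
    log_mul (hp i).ne' (exp_pos _).ne', log_exp]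
  ring

theorem sum_mul_log_div_gibbs (hp : ∀ i, 0 < p i) {u : ι → ℝ} (hu : ∑ i, u i = 1) :
    ∑ i, u i * log (u i / gibbs p ξ i) =
      ∑ i, u i * log (u i / p i) + ∑ i, ξ i * u i + log (∑ j, p j * exp (-ξ j)) := by
  have hterm (i : ι) : u i * log (u i / gibbs p ξ i) =
      u i * log (u i / p i) + ξ i * u i + u i * log (∑ j, p j * exp (-ξ j)) := by
    rcases eq_or_ne (u i) 0 with h0 | h0
    · simp [h0]
    · rw [log_div h0 (gibbs_pos hp i).ne', log_div h0 (hp i).ne', log_gibbs hp]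
      ring
  simp only [hterm, Finset.sum_add_distrib, ← Finset.sum_mul, hu, one_mul]

theorem proxObjective_eq (hp : ∀ i, 0 < p i) {u : ι → ℝ} (hu : ∑ i, u i = 1) :
    proxObjective p ξ u = ∑ i, u i * log (u i / gibbs p ξ i) -
      log (∑ j, p j * exp (-ξ j)) - ∑ i, ξ i * p i := by
  rw [proxObjective, sum_mul_log_div_gibbs hp hu]
  simp only [mul_sub, Finset.sum_sub_distrib]
  ring

theorem eq_gibbs_of_proxObjective_le (hp : ∀ i, 0 < p i) {u : ι → ℝ} (hu0 : ∀ i, 0 ≤ u i)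
    (hu1 : ∑ i, u i = 1) (hle : proxObjective p ξ u ≤ proxObjective p ξ (gibbs p ξ)) :
    u = gibbs p ξ := by
  refine eq_of_sum_mul_log_div_nonpos hu0 (gibbs_pos hp) (by rw [hu1, sum_gibbs hp]) ?_
  rw [proxObjective_eq hp hu1, proxObjective_eq hp (sum_gibbs hp)] at hle
  simpa [div_self (gibbs_pos hp _).ne'] using hle

end

theorem stmt14_general {m : ℕ} (hm : 0 < m) (p q ξ pt : Fin m → ℝ)
    (hp : ∀ i, 0 < p i) (hp1 : ∑ i, p i = 1)
    (hq1 : ∑ i, q i = 1)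
    (hpt0 : ∀ i, 0 ≤ pt i) (hpt1 : ∑ i, pt i = 1)
    (hmin : ∀ u : Fin m → ℝ, (∀ i, 0 ≤ u i) → (∑ i, u i = 1) →
      (∑ i, ξ i * (pt i - p i)) + (∑ i, pt i * Real.log (pt i / p i)) ≤
      (∑ i, ξ i * (u i - p i)) + ∑ i, u i * Real.log (u i / p i)) :
    (∑ i, q i * Real.log (q i / pt i)) ≤
      (∑ i, q i * Real.log (q i / p i)) + (∑ i, ξ i * (q i - p i)) +
        (Finset.univ.sup' (Finset.univ_nonempty_iff.mpr (Fin.pos_iff_nonempty.mp hm))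
          (fun i => |ξ i|)) ^ 2 / 2 := by
  have : Nonempty (Fin m) := Fin.pos_iff_nonempty.mp hm
  set B := Finset.univ.sup' _ fun i => |ξ i|
  have hξ (i : Fin m) : -ξ i ∈ Set.Icc (-B) B := by
    have := abs_le.mp (Finset.le_sup' (fun j => |ξ j|) (Finset.mem_univ i))
    constructor <;> linarith
  have hcgf : log (∑ i, p i * exp (-ξ i)) ≤ -∑ i, ξ i * p i + B ^ 2 / 2 := by
    rw [log_le_iff_le_exp (sum_mul_exp_pos hp)]
    refine (sum_mul_exp_le (fun i => (hp i).le) hp1 hξ).trans_eq (congrArg exp ?_)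
    simp only [mul_comm (p _), neg_mul, Finset.sum_neg_distrib]
    ring
  obtain rfl := eq_gibbs_of_proxObjective_le hp hpt0 hpt1
    (hmin _ (fun i => (gibbs_pos hp i).le) (sum_gibbs hp))
  rw [sum_mul_log_div_gibbs hp hq1]
  simp only [mul_sub, Finset.sum_sub_distrib]
  linarith

/-- Prox-mapping (three-point) inequality for entropic mirror descent: if `pt` minimizes
`ξ'(u - p) + V(p, u)` over the simplex, where `V(p, u) = Σ_i u_i log(u_i / p_i)` is the
KL divergence and `p` is in the relative interior, then for every `q` in the simplex,
`V(pt, q) ≤ V(p, q) + ξ'(q - p) + ‖ξ‖_∞² / 2`. -/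
theorem stmt14 {m : ℕ} (hm : 0 < m) (p q ξ pt : Fin m → ℝ)
    (hp : ∀ i, 0 < p i) (hp1 : ∑ i, p i = 1)
    (hq0 : ∀ i, 0 ≤ q i) (hq1 : ∑ i, q i = 1)
    (hpt0 : ∀ i, 0 ≤ pt i) (hpt1 : ∑ i, pt i = 1)
    (hmin : ∀ u : Fin m → ℝ, (∀ i, 0 ≤ u i) → (∑ i, u i = 1) →
      (∑ i, ξ i * (pt i - p i)) + (∑ i, pt i * Real.log (pt i / p i)) ≤
      (∑ i, ξ i * (u i - p i)) + ∑ i, u i * Real.log (u i / p i)) :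
    (∑ i, q i * Real.log (q i / pt i)) ≤
      (∑ i, q i * Real.log (q i / p i)) + (∑ i, ξ i * (q i - p i)) +
        (Finset.univ.sup' (Finset.univ_nonempty_iff.mpr (Fin.pos_iff_nonempty.mp hm))
          (fun i => |ξ i|)) ^ 2 / 2 :=
  stmt14_general hm p q ξ pt hp hp1 hq1 hpt0 hpt1 hmin
end

section
/- Let (Y_k)_{k≥1} be a sequence of integrable real-valued random variables that is uniformly bounded below. If Σ_{k=1}^∞ E[(E[Y_{k+1} − Y_k | Y_1,…,Y_k])⁺] < ∞, where x⁺ = max(x, 0), then Y_k converges almost surely to a (finite) random variable. -/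
/-!
Subtracting the compensator `Aₙ = ∑_{i<n} E[Y_{i+1} - Y_i | ℱ_i]⁺` of the positive drift turns
`Y` into a supermartingale `Y - A`. The compensator is increasing and predictable with
`E Aₙ ≤ ∑ₖ E[E[Y_{k+1} - Y_k | ℱ_k]⁺] < ∞`, so `-A` is an `L¹`-bounded supermartingale; since
`Y ≥ c`, the negative part of `Y - A` is at most `A + c⁻`, so `Y - A` is `L¹`-bounded as well.
Doob's convergence theorem makes both converge almost surely, hence so does `Y = (Y - A) + A`.
-/

open MeasureTheory Filter Topology Finset

namespace MeasureTheory

variable {Ω : Type*} {m0 : MeasurableSpace Ω} {μ : Measure Ω} {ℱ : Filtration ℕ m0}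

theorem Supermartingale.integral_abs_le [IsFiniteMeasure μ] {X : ℕ → Ω → ℝ} {K : ℝ}
    (hX : Supermartingale X ℱ μ) (hK : ∀ n, ∫ ω, (X n ω)⁻ ∂μ ≤ K) (n : ℕ) :
    ∫ ω, |X n ω| ∂μ ≤ ∫ ω, X 0 ω ∂μ + 2 * K := by
  have habs : (fun ω => |X n ω|) = fun ω => X n ω + 2 * (X n ω)⁻ := by
    funext ω
    linarith [posPart_add_negPart (X n ω), posPart_sub_negPart (X n ω)]
  have hneg : Integrable (fun ω => (X n ω)⁻) μ := (hX.integrable n).neg_part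
  have hmono : ∫ ω, X n ω ∂μ ≤ ∫ ω, X 0 ω ∂μ := by
    simpa only [setIntegral_univ] using hX.setIntegral_le n.zero_le MeasurableSet.univ
  rw [habs, integral_add (hX.integrable n) (hneg.const_mul 2), integral_const_mul]
  linarith [hK n]

theorem Supermartingale.exists_ae_tendsto_of_integral_negPart_le [IsFiniteMeasure μ]
    {X : ℕ → Ω → ℝ} {K : ℝ} (hX : Supermartingale X ℱ μ) (hK : ∀ n, ∫ ω, (X n ω)⁻ ∂μ ≤ K) :
    ∀ᵐ ω ∂μ, ∃ L, Tendsto (fun n => X n ω) atTop (𝓝 L) := by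
  have hbdd : ∀ n, eLpNorm ((-X) n) 1 μ ≤ (∫ ω, X 0 ω ∂μ + 2 * K).toNNReal := fun n => by
    rw [Pi.neg_apply, eLpNorm_neg, eLpNorm_one_eq_lintegral_enorm,
      ← ofReal_integral_norm_eq_lintegral_enorm (hX.integrable n)]
    exact ENNReal.ofReal_le_ofReal (hX.integral_abs_le hK n)
  filter_upwards [hX.neg.exists_ae_tendsto_of_bdd hbdd] with ω ⟨L, hL⟩
  exact ⟨-L, by simpa using hL.neg⟩

lemma integrable_posPart_condExp {m : MeasurableSpace Ω} {f : Ω → ℝ} :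
    Integrable (fun ω => (μ[f | m] ω)⁺) μ :=
  integrable_condExp.pos_part

lemma stronglyMeasurable_posPart_condExp {m : MeasurableSpace Ω} {f : Ω → ℝ} :
    StronglyMeasurable[m] (fun ω => (μ[f | m] ω)⁺) :=
  (stronglyMeasurable_condExp.measurable.max measurable_const).stronglyMeasurable

noncomputable def posPredictablePart (Y : ℕ → Ω → ℝ) (ℱ : Filtration ℕ m0) (μ : Measure Ω)
    (n : ℕ) (ω : Ω) : ℝ :=
  ∑ i ∈ range n, (μ[Y (i + 1) - Y i | ℱ i] ω)⁺

section posPredictablePart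

variable {Y : ℕ → Ω → ℝ}

lemma posPredictablePart_nonneg (n : ℕ) (ω : Ω) : 0 ≤ posPredictablePart Y ℱ μ n ω :=
  sum_nonneg fun _ _ => posPart_nonneg _

lemma posPredictablePart_succ (n : ℕ) (ω : Ω) :
    posPredictablePart Y ℱ μ (n + 1) ω =
      posPredictablePart Y ℱ μ n ω + (μ[Y (n + 1) - Y n | ℱ n] ω)⁺ :=
  sum_range_succ _ _

lemma monotone_posPredictablePart (ω : Ω) : Monotone (posPredictablePart Y ℱ μ · ω) :=
  monotone_nat_of_le_succ fun n => by
    rw [posPredictablePart_succ]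
    exact le_add_of_nonneg_right (posPart_nonneg _)

lemma stronglyMeasurable_posPredictablePart {n m : ℕ} (hnm : n ≤ m + 1) :
    StronglyMeasurable[ℱ m] (posPredictablePart Y ℱ μ n) := by
  refine Finset.stronglyMeasurable_fun_sum _ fun i hi => ?_
  have him : i ≤ m := by have := mem_range.1 hi; omega
  exact stronglyMeasurable_posPart_condExp.mono (ℱ.mono him)

lemma integrable_posPredictablePart (n : ℕ) : Integrable (posPredictablePart Y ℱ μ n) μ :=
  integrable_finsetSum _ fun _ _ => integrable_posPart_condExp

lemma integral_posPredictablePart_le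
    (hsum : Summable fun i => ∫ ω, (μ[Y (i + 1) - Y i | ℱ i] ω)⁺ ∂μ) (n : ℕ) :
    ∫ ω, posPredictablePart Y ℱ μ n ω ∂μ ≤ ∑' i, ∫ ω, (μ[Y (i + 1) - Y i | ℱ i] ω)⁺ ∂μ := by
  simp only [posPredictablePart]
  rw [integral_finsetSum _ fun _ _ => integrable_posPart_condExp]
  exact hsum.sum_le_tsum _ fun _ _ => integral_nonneg fun ω => posPart_nonneg _

lemma supermartingale_neg_posPredictablePart [IsFiniteMeasure μ] :
    Supermartingale (fun n => -posPredictablePart Y ℱ μ n) ℱ μ := by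
  refine Submartingale.neg (submartingale_nat
    (fun n => stronglyMeasurable_posPredictablePart n.le_succ) integrable_posPredictablePart
    fun n => ?_)
  rw [condExp_of_stronglyMeasurable (ℱ.le n) (stronglyMeasurable_posPredictablePart le_rfl)
    (integrable_posPredictablePart _)]
  exact ae_of_all _ fun ω => monotone_posPredictablePart ω n.le_succ

lemma supermartingale_sub_posPredictablePart [IsFiniteMeasure μ] (hY : StronglyAdapted ℱ Y)
    (hint : ∀ n, Integrable (Y n) μ) :
    Supermartingale (fun n => Y n - posPredictablePart Y ℱ μ n) ℱ μ := by
  refine supermartingale_of_condExp_sub_nonneg_nat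
    (fun n => (hY n).sub (stronglyMeasurable_posPredictablePart n.le_succ))
    (fun n => (hint n).sub (integrable_posPredictablePart n)) fun n => ?_
  set Δ := Y (n + 1) - Y n
  have hsplit : Y n - posPredictablePart Y ℱ μ n - (Y (n + 1) - posPredictablePart Y ℱ μ (n + 1))
      = (fun ω => (μ[Δ | ℱ n] ω)⁺) - Δ := by
    funext ω
    simp only [Pi.sub_apply, posPredictablePart_succ, Δ]
    ring
  rw [hsplit]
  filter_upwards [condExp_sub integrable_posPart_condExp ((hint _).sub (hint _)) (ℱ n)] with ω hω
  rw [hω, Pi.sub_apply, condExp_of_stronglyMeasurable (ℱ.le n)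
    stronglyMeasurable_posPart_condExp integrable_posPart_condExp,
    Pi.zero_apply, sub_nonneg]
  exact le_posPart _

end posPredictablePart

theorem ae_exists_tendsto_of_summable_integral_posPart_condExp [IsFiniteMeasure μ]
    {Y : ℕ → Ω → ℝ} {c : ℝ} (hY : StronglyAdapted ℱ Y) (hint : ∀ n, Integrable (Y n) μ)
    (hbdd : ∀ n ω, c ≤ Y n ω)
    (hsum : Summable fun n => ∫ ω, (μ[Y (n + 1) - Y n | ℱ n] ω)⁺ ∂μ) :
    ∀ᵐ ω ∂μ, ∃ L, Tendsto (fun n => Y n ω) atTop (𝓝 L) := by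
  set A := posPredictablePart Y ℱ μ
  set S := ∑' n, ∫ ω, (μ[Y (n + 1) - Y n | ℱ n] ω)⁺ ∂μ
  have hA : ∀ n, ∫ ω, A n ω ∂μ ≤ S := integral_posPredictablePart_le hsum
  have hYA_negPart : ∀ n, ∫ ω, (Y n ω - A n ω)⁻ ∂μ ≤ S + μ.real Set.univ * c⁻ := fun n => by
    have hpt : ∀ ω, (Y n ω - A n ω)⁻ ≤ A n ω + c⁻ := fun ω =>
      max_le (by linarith [hbdd n ω, neg_le_negPart c])
        (add_nonneg (posPredictablePart_nonneg n ω) (negPart_nonneg c))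
    calc ∫ ω, (Y n ω - A n ω)⁻ ∂μ ≤ ∫ ω, (A n ω + c⁻) ∂μ :=
          integral_mono ((hint n).sub (integrable_posPredictablePart n)).neg_part
            ((integrable_posPredictablePart n).add (integrable_const _)) hpt
      _ ≤ S + μ.real Set.univ * c⁻ := by
          rw [integral_add (integrable_posPredictablePart n) (integrable_const _), integral_const,
            smul_eq_mul]
          linarith [hA n]
  have hA_negPart : ∀ n, ∫ ω, (-A n ω)⁻ ∂μ ≤ S := fun n => by
    have hneg : ∀ ω, (-A n ω)⁻ = A n ω := fun ω => by
      rw [negPart_neg, posPart_of_nonneg (posPredictablePart_nonneg n ω)]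
    simpa only [hneg] using hA n
  have hYA_lim := (supermartingale_sub_posPredictablePart hY hint)
    |>.exists_ae_tendsto_of_integral_negPart_le hYA_negPart
  have hA_lim := supermartingale_neg_posPredictablePart.exists_ae_tendsto_of_integral_negPart_le
    hA_negPart
  filter_upwards [hYA_lim, hA_lim] with ω ⟨L₁, hL₁⟩ ⟨L₂, hL₂⟩
  exact ⟨L₁ - L₂, by simpa using hL₁.sub hL₂⟩

lemma Filtration.natural_eq_iSup_range {β : Type*} [TopologicalSpace β]
    [TopologicalSpace.MetrizableSpace β] [mβ : MeasurableSpace β] [BorelSpace β]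
    (u : ℕ → Ω → β) (hu : ∀ k, StronglyMeasurable (u k)) (k : ℕ) :
    Filtration.natural u hu k = ⨆ i ∈ range (k + 1), MeasurableSpace.comap (u i) mβ := by
  simp [Filtration.natural]

end MeasureTheory

/-- Almost-supermartingale convergence (Blum): if `(Y k)` are integrable random
variables, uniformly bounded below, and the sum over `k` of the expectations of the
positive parts of the conditional expectations `E[Y_{k+1} - Y_k | Y_1, …, Y_k]` is
finite, then `Y k` converges almost surely to a finite random variable. -/
theorem stmt15 {Ω : Type*} [MeasurableSpace Ω] (μ : Measure Ω) [IsProbabilityMeasure μ]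
    (Y : ℕ → Ω → ℝ) (hmeas : ∀ k, Measurable (Y k))
    (hint : ∀ k, Integrable (Y k) μ)
    (c : ℝ) (hbdd : ∀ k ω, c ≤ Y k ω)
    (hsum : Summable (fun k : ℕ =>
      ∫ ω, max ((μ[Y (k + 1) - Y k |
        ⨆ i ∈ Finset.range (k + 1), MeasurableSpace.comap (Y i) inferInstance]) ω) 0 ∂μ)) :
    ∀ᵐ ω ∂μ, ∃ L : ℝ, Tendsto (fun k => Y k ω) atTop (nhds L) := by
  have hY : ∀ k, StronglyMeasurable (Y k) := fun k => (hmeas k).stronglyMeasurable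
  refine ae_exists_tendsto_of_summable_integral_posPart_condExp
    (Filtration.stronglyAdapted_natural hY) hint hbdd ?_
  simp only [Filtration.natural_eq_iSup_range]
  -- on `ℝ`, `x⁺` unfolds to `max x 0`
  exact hsum
end
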